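/- arXiv:2301.03993 — 4 statements merged into one kernel-verified Lean document; each statement's English description precedes it below -/
import Mathlib

section
/- For every real number p ≥ 2 and all real numbers A, B, one has |A - B|^p ≤ 3·2^(p-1) · (J_p(A) - J_p(B))·(A - B), where J_p(t) := |t|^(p-2)·t. -/
/-!
`J_p` is odd, so one may assume `B ≤ A` and `0 ≤ A`; put `q = p - 1 ≥ 1`.
If `0 ≤ B`, superadditivity of `t ↦ t^q` gives `(A - B)^q ≤ A^q - B^q = J_p(A) - J_p(B)`.
If `B < 0`, convexity gives `(A + |B|)^q ≤ 2^(q-1) (A^q + |B|^q) = 2^(p-2) (J_p(A) - J_p(B))`.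
Multiplying by `A - B` yields the inequality with the better constant `2^(p-2)`.
-/

/-- `J_p(t) = |t|^(p-2) t`. -/
noncomputable def Jp (p t : ℝ) : ℝ := |t| ^ (p - 2) * t

namespace Real

lemma rpow_add_le_mul_rpow_add_rpow {a b p : ℝ} (ha : 0 ≤ a) (hb : 0 ≤ b) (hp : 1 ≤ p) :
    (a + b) ^ p ≤ 2 ^ (p - 1) * (a ^ p + b ^ p) := by
  lift a to NNReal using ha
  lift b to NNReal using hb
  exact_mod_cast NNReal.rpow_add_le_mul_rpow_add_rpow a b hp

lemma sub_rpow_le_rpow_sub_rpow {a b p : ℝ} (hb : 0 ≤ b) (hba : b ≤ a) (hp : 1 ≤ p) :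
    (a - b) ^ p ≤ a ^ p - b ^ p := by
  have h := add_rpow_le_rpow_add (sub_nonneg.2 hba) hb hp
  rw [sub_add_cancel] at h
  linarith

end Real

lemma Jp_neg (p t : ℝ) : Jp p (-t) = -Jp p t := by
  simp only [Jp, abs_neg, mul_neg]

lemma Jp_of_nonneg {p t : ℝ} (hp : p ≠ 1) (ht : 0 ≤ t) : Jp p t = t ^ (p - 1) := by
  rcases ht.eq_or_lt with rfl | ht
  · simp [Jp, Real.zero_rpow (sub_ne_zero.2 hp)]
  · rw [Jp, abs_of_pos ht, ← Real.rpow_add_one ht.ne']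
    ring_nf

lemma sub_rpow_le_two_rpow_mul_Jp_sub {p A B : ℝ} (hp : 2 ≤ p) (hBA : B ≤ A) (hA : 0 ≤ A) :
    (A - B) ^ (p - 1) ≤ 2 ^ (p - 2) * (Jp p A - Jp p B) := by
  have hq : 1 ≤ p - 1 := by linarith
  rw [Jp_of_nonneg (by linarith) hA]
  rcases le_or_gt 0 B with hB | hB
  · rw [Jp_of_nonneg (by linarith) hB]
    calc (A - B) ^ (p - 1) ≤ A ^ (p - 1) - B ^ (p - 1) :=
          Real.sub_rpow_le_rpow_sub_rpow hB hBA hq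
      _ ≤ 2 ^ (p - 2) * (A ^ (p - 1) - B ^ (p - 1)) :=
          le_mul_of_one_le_left (sub_nonneg.2 (Real.rpow_le_rpow hB hBA (by linarith)))
            (Real.one_le_rpow one_le_two (by linarith))
  · have hJB : Jp p B = -(-B) ^ (p - 1) := by
      rw [← neg_neg (Jp p B), ← Jp_neg, Jp_of_nonneg (by linarith) (neg_nonneg.2 hB.le)]
    calc (A - B) ^ (p - 1) = (A + -B) ^ (p - 1) := by rw [sub_eq_add_neg]
      _ ≤ 2 ^ (p - 1 - 1) * (A ^ (p - 1) + (-B) ^ (p - 1)) :=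
          Real.rpow_add_le_mul_rpow_add_rpow hA (neg_nonneg.2 hB.le) hq
      _ = 2 ^ (p - 2) * (A ^ (p - 1) - Jp p B) := by rw [hJB]; ring_nf

lemma abs_sub_rpow_le_two_rpow_mul_Jp {p : ℝ} (hp : 2 ≤ p) (A B : ℝ) :
    |A - B| ^ p ≤ 2 ^ (p - 2) * ((Jp p A - Jp p B) * (A - B)) := by
  wlog hBA : B ≤ A generalizing A B
  · have h := this B A (le_of_not_ge hBA)
    rwa [abs_sub_comm, show (Jp p B - Jp p A) * (B - A) = (Jp p A - Jp p B) * (A - B) by ring] at h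
  wlog hA : 0 ≤ A generalizing A B
  · have h := this (-B) (-A) (neg_le_neg hBA) (by linarith)
    rwa [Jp_neg, Jp_neg, neg_sub_neg,
      show (-Jp p B - -Jp p A) * (A - B) = (Jp p A - Jp p B) * (A - B) by ring] at h
  have hAB : 0 ≤ A - B := sub_nonneg.2 hBA
  calc |A - B| ^ p = (A - B) ^ (p - 1) * (A - B) := by
        rw [abs_of_nonneg hAB, ← Real.rpow_add_one' hAB (by linarith), sub_add_cancel]
    _ ≤ 2 ^ (p - 2) * (Jp p A - Jp p B) * (A - B) :=
        mul_le_mul_of_nonneg_right (sub_rpow_le_two_rpow_mul_Jp_sub hp hBA hA) hAB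
    _ = 2 ^ (p - 2) * ((Jp p A - Jp p B) * (A - B)) := mul_assoc _ _ _

theorem pointwise_monotonicity (p : ℝ) (hp : 2 ≤ p) (A B : ℝ) :
    |A - B| ^ p ≤ 3 * (2 : ℝ) ^ (p - 1) * ((Jp p A - Jp p B) * (A - B)) := by
  have h := abs_sub_rpow_le_two_rpow_mul_Jp hp A B
  have hJ : 0 ≤ (Jp p A - Jp p B) * (A - B) :=
    nonneg_of_mul_nonneg_right ((Real.rpow_nonneg (abs_nonneg _) p).trans h) (by positivity)
  have hc : (2 : ℝ) ^ (p - 2) ≤ 3 * 2 ^ (p - 1) := by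
    have := Real.rpow_le_rpow_of_exponent_le one_le_two (by linarith : p - 2 ≤ p - 1)
    linarith [Real.rpow_nonneg zero_le_two (p - 1)]
  exact h.trans (mul_le_mul_of_nonneg_right hc hJ)
end

section
/- If a - b - c + d ≠ 0 or a - b = c - d, then 3·2^(p-1)·(J_p(a−b) − J_p(c−d)) · sign(a−b−c+d) ≥ |a−b−c+d|^(p-1); equivalently, for all reals a,b,c,d, (J_p(a−b) − J_p(c−d))·((a−c)−(b−d)) ≥ (1/(3·2^(p−1)))·|a−b−c+d|^p, i.e. 3·2^(p−1)(J_p(a−b) − J_p(c−d)) ≥ J_p((a−c)−(b−d)) in the sense that the difference times (a−b−c+d) is nonnegative. -/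
lemma Jp_nonpos {p t : ℝ} (hp : p ≠ 1) (ht : t ≤ 0) : Jp p t ≤ 0 := by
  rw [← neg_neg t, Jp_neg, Jp_of_nonneg hp (neg_nonneg.mpr ht), neg_nonpos]
  exact Real.rpow_nonneg (neg_nonneg.mpr ht) _

lemma rpow_sub_le_rpow_sub_rpow {q x y : ℝ} (hq : 1 ≤ q) (hy : 0 ≤ y) (hyx : y ≤ x) :
    (x - y) ^ q ≤ x ^ q - y ^ q := by
  have := Real.add_rpow_le_rpow_add (sub_nonneg.mpr hyx) hy hq
  rw [sub_add_cancel] at this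
  linarith

lemma half_sub_rpow_le_Jp_sub_of_add_nonneg {p x y : ℝ} (hp : 2 ≤ p) (hyx : y ≤ x)
    (hxy : 0 ≤ x + y) : ((x - y) / 2) ^ (p - 1) ≤ Jp p x - Jp p y := by
  have hp1 : p ≠ 1 := by linarith
  have hx : 0 ≤ x := by linarith
  have hhalf : 0 ≤ (x - y) / 2 := by linarith
  rw [Jp_of_nonneg hp1 hx]
  rcases le_total y 0 with hy | hy
  · have := Real.rpow_le_rpow hhalf (by linarith : (x - y) / 2 ≤ x) (by linarith : 0 ≤ p - 1)
    linarith [Jp_nonpos hp1 hy]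
  · rw [Jp_of_nonneg hp1 hy]
    calc ((x - y) / 2) ^ (p - 1) ≤ (x - y) ^ (p - 1) :=
          Real.rpow_le_rpow hhalf (by linarith) (by linarith)
      _ ≤ x ^ (p - 1) - y ^ (p - 1) := rpow_sub_le_rpow_sub_rpow (by linarith) hy hyx

lemma half_sub_rpow_le_Jp_sub {p x y : ℝ} (hp : 2 ≤ p) (hyx : y ≤ x) :
    ((x - y) / 2) ^ (p - 1) ≤ Jp p x - Jp p y := by
  rcases le_total 0 (x + y) with hxy | hxy
  · exact half_sub_rpow_le_Jp_sub_of_add_nonneg hp hyx hxy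
  · have := half_sub_rpow_le_Jp_sub_of_add_nonneg hp (neg_le_neg hyx) (by linarith)
    rw [Jp_neg, Jp_neg, neg_sub_neg] at this
    linarith

lemma abs_sub_rpow_le_Jp_sub_mul {p : ℝ} (hp : 2 ≤ p) (x y : ℝ) :
    |x - y| ^ p ≤ 2 ^ (p - 1) * ((Jp p x - Jp p y) * (x - y)) := by
  wlog hyx : y ≤ x generalizing x y
  · have := this y x (by linarith)
    rw [abs_sub_comm]
    linarith
  have hd : 0 ≤ x - y := sub_nonneg.mpr hyx
  have hpow : (x - y) ^ p = (x - y) ^ (p - 1) * (x - y) := by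
    rw [← Real.rpow_add_one' hd (by linarith), sub_add_cancel]
  calc |x - y| ^ p = 2 ^ (p - 1) * (((x - y) / 2) ^ (p - 1) * (x - y)) := by
        rw [abs_of_nonneg hd, Real.div_rpow hd zero_le_two, hpow]
        field_simp
    _ ≤ 2 ^ (p - 1) * ((Jp p x - Jp p y) * (x - y)) := by
        gcongr
        exact half_sub_rpow_le_Jp_sub hp hyx

theorem pointwise_rearrange (p : ℝ) (hp : 2 ≤ p) (a b c d : ℝ) :
    |a - b - c + d| ^ p
      ≤ 3 * (2 : ℝ) ^ (p - 1) * ((Jp p (a - b) - Jp p (c - d)) * (a - b - c + d)) := by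
  have h := abs_sub_rpow_le_Jp_sub_mul hp (a - b) (c - d)
  rw [show a - b - (c - d) = a - b - c + d by ring] at h
  have : 0 ≤ 2 ^ (p - 1) * ((Jp p (a - b) - Jp p (c - d)) * (a - b - c + d)) :=
    (Real.rpow_nonneg (abs_nonneg _) p).trans h
  linarith
end

section
/- Let α > 0, 0 < q < ∞, and suppose B_r(x₀) ⊂ B_R(x₁). Then for every u ∈ L^q_α(ℝⁿ), Tail_{q,α}(u; x₀, r)^q ≤ (r/R)^α · (R/(R − |x₁ − x₀|))^{n+α} · Tail_{q,α}(u; x₁, R)^q + r^{−n} ‖u‖_{L^q(B_R(x₁))}^q. -/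
/-!
Split the complement of `B_r(x₀)` into the complement of `B_R(x₁)` and the shell
`B_R(x₁) ∖ B_r(x₀)`. Outside `B_R(x₁)` the triangle inequality gives
`|x - x₁| ≤ R / (R - |x₁ - x₀|) · |x - x₀|`, so the kernel centred at `x₀` is dominated by
`(R / (R - |x₁ - x₀|))^(n+α)` times the kernel centred at `x₁`; on the shell the kernel is at most
`r^-(n+α)`, and `r^α · r^-(n+α) = r^-n`.
-/

open MeasureTheory Metric

/-- The tail quantity `Tail_{q,α}(u; x₀, R)`. -/
noncomputable def Tail (n : ℕ) (q α : ℝ) (u : EuclideanSpace ℝ (Fin n) → ℝ)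
    (x₀ : EuclideanSpace ℝ (Fin n)) (R : ℝ) : ℝ :=
  (R ^ α * ∫ x in (ball x₀ R)ᶜ, |u x| ^ q / ‖x - x₀‖ ^ ((n : ℝ) + α)) ^ (1 / q)

open Set

section NormedGroup

variable {E : Type*} [SeminormedAddCommGroup E] {s : ℝ}

lemma le_norm_sub_of_mem_compl_ball {x y : E} {ρ : ℝ} (hx : x ∈ (ball y ρ)ᶜ) : ρ ≤ ‖x - y‖ :=
  not_lt.mp (hx ∘ mem_ball_iff_norm.mpr)

lemma one_add_norm_rpow_le_of_le_norm_sub (hs : 0 ≤ s) {ρ : ℝ} (hρ : 0 < ρ) {x y : E}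
    (hxy : ρ ≤ ‖x - y‖) :
    1 + ‖x‖ ^ s ≤ (ρ ^ (-s) + (1 + ‖y‖ / ρ) ^ s) * ‖x - y‖ ^ s := by
  have hone : 1 ≤ ρ ^ (-s) * ‖x - y‖ ^ s := by
    rw [Real.rpow_neg hρ.le, inv_mul_eq_div, one_le_div (by positivity)]
    exact Real.rpow_le_rpow hρ.le hxy hs
  have hnorm : ‖x‖ ≤ (1 + ‖y‖ / ρ) * ‖x - y‖ := by
    have hy : ‖y‖ ≤ ‖y‖ / ρ * ‖x - y‖ := by
      rw [div_mul_eq_mul_div, le_div_iff₀ hρ]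
      exact mul_le_mul_of_nonneg_left hxy (norm_nonneg _)
    linarith [norm_le_norm_sub_add x y]
  have hpow : ‖x‖ ^ s ≤ (1 + ‖y‖ / ρ) ^ s * ‖x - y‖ ^ s := by
    rw [← Real.mul_rpow (by positivity) (norm_nonneg _)]
    exact Real.rpow_le_rpow (norm_nonneg _) hnorm hs
  linarith

lemma one_add_norm_rpow_le_of_norm_sub_le (hs : 0 ≤ s) {ρ : ℝ} {x y : E}
    (hxy : ‖x - y‖ ≤ ρ) : 1 + ‖x‖ ^ s ≤ 1 + (‖y‖ + ρ) ^ s := by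
  have : ‖x‖ ≤ ‖y‖ + ρ := by linarith [norm_le_norm_sub_add x y]
  gcongr

lemma norm_sub_le_div_mul_norm_sub {x x₀ x₁ : E} {R : ℝ} (hd : ‖x₁ - x₀‖ < R)
    (hx : R ≤ ‖x - x₁‖) : ‖x - x₁‖ ≤ R / (R - ‖x₁ - x₀‖) * ‖x - x₀‖ := by
  have htri : ‖x - x₁‖ ≤ ‖x - x₀‖ + ‖x₁ - x₀‖ := by
    simpa only [norm_sub_rev x₀ x₁] using norm_sub_le_norm_sub_add_norm_sub x x₀ x₁
  rw [div_mul_eq_mul_div, le_div_iff₀ (sub_pos.mpr hd)]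
  nlinarith [mul_nonneg (norm_nonneg (x₁ - x₀)) (sub_nonneg.mpr hx),
    mul_le_mul_of_nonneg_left htri ((norm_nonneg _).trans hd.le)]

variable [MeasurableSpace E] [OpensMeasurableSpace E] {μ : Measure E}

lemma IntegrableOn.div_of_le_const_mul {f w v : E → ℝ} {t : Set E} {C : ℝ}
    (ht : MeasurableSet t) (hf : IntegrableOn (fun x => f x / w x) t μ)
    (hw : Continuous w) (hv : Continuous v) (hw0 : ∀ x, 0 < w x) (hv0 : ∀ x ∈ t, 0 < v x)
    (hwv : ∀ x ∈ t, w x ≤ C * v x) : IntegrableOn (fun x => f x / v x) t μ := by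
  have hf_eq : (fun x => f x / w x * w x) = f := funext fun x => div_mul_cancel₀ _ (hw0 x).ne'
  have hmeas : AEStronglyMeasurable f (μ.restrict t) :=
    hf_eq ▸ hf.aestronglyMeasurable.mul hw.aestronglyMeasurable
  refine (hf.norm.const_mul C).mono'
    (hmeas.aemeasurable.div hv.measurable.aemeasurable).aestronglyMeasurable ?_
  refine ae_restrict_of_forall_mem ht fun x hx => ?_
  have hw0 := hw0 x
  have hv0 := hv0 x hx
  rw [norm_div, Real.norm_of_nonneg hv0.le, norm_div, Real.norm_of_nonneg hw0.le, mul_div_assoc',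
    div_le_div_iff₀ hv0 hw0]
  nlinarith [hwv x hx, norm_nonneg (f x)]

variable {f : E → ℝ}

lemma integrableOn_compl_ball_div_norm_sub_rpow (hs : 0 ≤ s)
    (hf : Integrable (fun x => f x / (1 + ‖x‖ ^ s)) μ) (y : E) {ρ : ℝ} (hρ : 0 < ρ) :
    IntegrableOn (fun x => f x / ‖x - y‖ ^ s) (ball y ρ)ᶜ μ :=
  IntegrableOn.div_of_le_const_mul measurableSet_ball.compl hf.integrableOn
    (continuous_const.add (continuous_norm.rpow_const fun _ => Or.inr hs))
    ((continuous_id.sub continuous_const).norm.rpow_const fun _ => Or.inr hs)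
    (fun _ => by positivity)
    (fun x hx => Real.rpow_pos_of_pos (hρ.trans_le (le_norm_sub_of_mem_compl_ball hx)) s)
    (fun x hx => one_add_norm_rpow_le_of_le_norm_sub hs hρ (le_norm_sub_of_mem_compl_ball hx))

lemma integrableOn_ball_of_integrable_div (hs : 0 ≤ s)
    (hf : Integrable (fun x => f x / (1 + ‖x‖ ^ s)) μ) (y : E) (ρ : ℝ) :
    IntegrableOn f (ball y ρ) μ := by
  simpa using IntegrableOn.div_of_le_const_mul (v := fun _ => 1) measurableSet_ball hf.integrableOn
    (continuous_const.add (continuous_norm.rpow_const fun _ => Or.inr hs)) continuous_const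
    (fun _ => by positivity) (fun _ _ => one_pos)
    (fun x hx => (one_add_norm_rpow_le_of_norm_sub_le hs (mem_ball_iff_norm.mp hx).le).trans_eq
      (mul_one _).symm)

lemma setIntegral_compl_ball_div_norm_sub_rpow_le (hf0 : ∀ x, 0 ≤ f x) (hs : 0 ≤ s)
    {x₀ x₁ : E} {R : ℝ} (hd : ‖x₁ - x₀‖ < R)
    (hint : IntegrableOn (fun x => f x / ‖x - x₁‖ ^ s) (ball x₁ R)ᶜ μ) :
    ∫ x in (ball x₁ R)ᶜ, f x / ‖x - x₀‖ ^ s ∂μ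
      ≤ (R / (R - ‖x₁ - x₀‖)) ^ s * ∫ x in (ball x₁ R)ᶜ, f x / ‖x - x₁‖ ^ s ∂μ := by
  rw [← integral_const_mul]
  refine integral_mono_of_nonneg (ae_of_all _ fun x => div_nonneg (hf0 x) (by positivity))
    (hint.const_mul _) (ae_restrict_of_forall_mem measurableSet_ball.compl fun x hx => ?_)
  have hx₁ : R ≤ ‖x - x₁‖ := le_norm_sub_of_mem_compl_ball hx
  have hx₀ : 0 < ‖x - x₀‖ := by
    linarith [norm_sub_le_norm_sub_add_norm_sub x x₀ x₁, norm_sub_rev x₀ x₁]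
  have hR : 0 < R := (norm_nonneg _).trans_lt hd
  have hcmp : ‖x - x₁‖ ^ s ≤ (R / (R - ‖x₁ - x₀‖)) ^ s * ‖x - x₀‖ ^ s := by
    rw [← Real.mul_rpow (div_pos hR (sub_pos.mpr hd)).le (norm_nonneg _)]
    exact Real.rpow_le_rpow (norm_nonneg _) (norm_sub_le_div_mul_norm_sub hd hx₁) hs
  dsimp only
  rw [mul_div_assoc', div_le_div_iff₀ (Real.rpow_pos_of_pos hx₀ s)
    (Real.rpow_pos_of_pos (hR.trans_le hx₁) s)]
  nlinarith [hf0 x]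

lemma setIntegral_sdiff_ball_div_norm_sub_rpow_le (hf0 : ∀ x, 0 ≤ f x) (hs : 0 ≤ s)
    {t : Set E} (ht : MeasurableSet t) (hint : IntegrableOn f t μ) (x₀ : E) {r : ℝ}
    (hr : 0 < r) :
    ∫ x in t \ ball x₀ r, f x / ‖x - x₀‖ ^ s ∂μ ≤ r ^ (-s) * ∫ x in t, f x ∂μ := by
  rw [← integral_const_mul]
  calc ∫ x in t \ ball x₀ r, f x / ‖x - x₀‖ ^ s ∂μ
      ≤ ∫ x in t \ ball x₀ r, r ^ (-s) * f x ∂μ := by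
        refine integral_mono_of_nonneg (ae_of_all _ fun x => div_nonneg (hf0 x) (by positivity))
          ((hint.mono_set sdiff_subset).const_mul _)
          (ae_restrict_of_forall_mem (ht.diff measurableSet_ball) fun x hx => ?_)
        have hx₀ : r ≤ ‖x - x₀‖ := le_norm_sub_of_mem_compl_ball hx.2
        dsimp only
        rw [Real.rpow_neg hr.le, inv_mul_eq_div]
        exact div_le_div_of_nonneg_left (hf0 x) (by positivity) (Real.rpow_le_rpow hr.le hx₀ hs)
    _ ≤ ∫ x in t, r ^ (-s) * f x ∂μ :=
        setIntegral_mono_set (hint.const_mul _)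
          (ae_of_all _ fun x => mul_nonneg (by positivity) (hf0 x)) sdiff_subset.eventuallyLE

end NormedGroup

lemma tail_rpow_eq {n : ℕ} {q : ℝ} (hq : q ≠ 0) (α : ℝ) (u : EuclideanSpace ℝ (Fin n) → ℝ)
    (y : EuclideanSpace ℝ (Fin n)) {ρ : ℝ} (hρ : 0 ≤ ρ) :
    Tail n q α u y ρ ^ q = ρ ^ α * ∫ x in (ball y ρ)ᶜ, |u x| ^ q / ‖x - y‖ ^ ((n : ℝ) + α) := by
  have h0 : 0 ≤ ρ ^ α * ∫ x in (ball y ρ)ᶜ, |u x| ^ q / ‖x - y‖ ^ ((n : ℝ) + α) :=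
    mul_nonneg (by positivity) (integral_nonneg fun x => by positivity)
  rw [Tail, ← Real.rpow_mul h0, one_div, inv_mul_cancel₀ hq, Real.rpow_one]

theorem tail_shrink (n : ℕ) (α q r R : ℝ) (hα : 0 < α) (hq : 0 < q)
    (hr : 0 < r) (hR : 0 < R)
    (x₀ x₁ : EuclideanSpace ℝ (Fin n)) (hsub : ball x₀ r ⊆ ball x₁ R)
    (u : EuclideanSpace ℝ (Fin n) → ℝ)
    (hu : Integrable fun x => |u x| ^ q / (1 + ‖x‖ ^ ((n : ℝ) + α))) :
    Tail n q α u x₀ r ^ q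
      ≤ (r / R) ^ α * (R / (R - ‖x₁ - x₀‖)) ^ ((n : ℝ) + α) * Tail n q α u x₁ R ^ q
        + r ^ (-(n : ℝ)) * ∫ x in ball x₁ R, |u x| ^ q := by
  have hs : (0 : ℝ) ≤ n + α := by positivity
  have hd : ‖x₁ - x₀‖ < R := mem_ball_iff_norm'.mp (hsub (mem_ball_self hr))
  have hsplit := integral_inter_add_sdiff (t := (ball x₁ R)ᶜ) measurableSet_ball.compl
    (integrableOn_compl_ball_div_norm_sub_rpow hs hu x₀ hr)
  rw [inter_eq_right.mpr (compl_subset_compl.mpr hsub), compl_sdiff_compl] at hsplit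
  have hfar := setIntegral_compl_ball_div_norm_sub_rpow_le (fun x => by positivity) hs hd
    (integrableOn_compl_ball_div_norm_sub_rpow hs hu x₁ hR)
  have hnear := setIntegral_sdiff_ball_div_norm_sub_rpow_le (fun x => by positivity) hs
    measurableSet_ball (integrableOn_ball_of_integrable_div hs hu x₁ R) x₀ hr
  have hpow : r ^ α * r ^ (-((n : ℝ) + α)) = r ^ (-(n : ℝ)) := by
    rw [← Real.rpow_add hr]; ring_nf
  rw [tail_rpow_eq hq.ne' α u x₀ hr.le, tail_rpow_eq hq.ne' α u x₁ hR.le, ← hsplit,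
    Real.div_rpow hr.le hR.le, ← hpow]
  calc _ ≤ r ^ α * ((R / (R - ‖x₁ - x₀‖)) ^ ((n : ℝ) + α) *
        ∫ x in (ball x₁ R)ᶜ, |u x| ^ q / ‖x - x₁‖ ^ ((n : ℝ) + α)) +
        r ^ α * (r ^ (-((n : ℝ) + α)) * ∫ x in ball x₁ R, |u x| ^ q) := by
        rw [mul_add]; gcongr
    _ = _ := by field_simp
end

section
/- Let p ≥ 2 and β ≥ 1, δ > 0, M > 0. Define F(t) = (min{t⁺, M} + δ)^β − δ^β where t⁺ = max{t,0}, and let 𝓕(t) = ∫₀ᵗ F(τ) dτ. Then for all t ∈ ℝ: 𝓕(t) ≥ ((t)⁺_M + δ)^{β+1}/(2(β+1)) − 2 δ^{β+1}, where (t)⁺_M := min{max{t,0}, M}. -/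
/-- `F(t) = (min(t⁺, M) + δ)^β − δ^β`. -/
noncomputable def Ffun (β δ M t : ℝ) : ℝ := (min (max t 0) M + δ) ^ β - δ ^ β

/-- `𝓕(t) = ∫₀ᵗ F(τ) dτ`. -/
noncomputable def Fcal (β δ M t : ℝ) : ℝ := ∫ τ in (0:ℝ)..t, Ffun β δ M τ

/-!
Since `F ≥ 0` and `F = 0` on `(-∞, 0]`, the primitive `𝓕` is monotone and vanishes on `(-∞, 0]`,
so `𝓕(t) ≥ 𝓕(s)` for the truncation `s = (t)⁺_M ∈ [0, M]`. On `[0, M]` the primitive is explicit,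
`𝓕(s) = ((s + δ)^{β+1} − δ^{β+1})/(β+1) − s δ^β`, and the negative term `s δ^β` is absorbed by
Young's inequality with exponents `β + 1` and `(β + 1)/β`, rescaled so that only half of
`(s + δ)^{β+1}/(β+1)` is spent.
-/

open intervalIntegral

/-- Young's inequality, scaled by `2^{1/(β+1)}`; the resulting factor `2^{1/β}` is at most `2`. -/
lemma two_mul_mul_rpow_le {β s d : ℝ} (hβ : 1 ≤ β) (hs : 0 ≤ s) (hd : 0 ≤ d) :
    2 * (β + 1) * (s * d ^ β) ≤ s ^ (β + 1) + 4 * β * d ^ (β + 1) := by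
  have hβ0 : 0 < β := by linarith
  have hconj : (β + 1).HolderConjugate ((β + 1) / β) := by
    rw [Real.holderConjugate_iff]
    exact ⟨by linarith, by field_simp; ring⟩
  set u : ℝ := 2 ^ (β + 1)⁻¹
  have hu : 0 < u := by positivity
  have hu_pow : u ^ (β + 1) = 2 := by
    rw [← Real.rpow_mul zero_le_two, inv_mul_cancel₀ (by positivity), Real.rpow_one]
  have hyoung := Real.young_inequality_of_nonneg (div_nonneg hs hu.le)
    (mul_nonneg hu.le (Real.rpow_nonneg hd β)) hconj
  have hprod : s / u * (u * d ^ β) = s * d ^ β := by field_simp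
  have hleft : (s / u) ^ (β + 1) = s ^ (β + 1) / 2 := by
    rw [Real.div_rpow hs hu.le, hu_pow]
  have hright : (u * d ^ β) ^ ((β + 1) / β) = 2 ^ β⁻¹ * d ^ (β + 1) := by
    rw [Real.mul_rpow hu.le (Real.rpow_nonneg hd β), ← Real.rpow_mul zero_le_two,
      ← Real.rpow_mul hd]
    congr 2 <;> field_simp
  have htwo : (2 : ℝ) ^ β⁻¹ ≤ 2 := by
    simpa using Real.rpow_le_rpow_of_exponent_le one_le_two (inv_le_one_of_one_le₀ hβ)
  rw [hprod, hleft, hright] at hyoung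
  have hdβ : 0 ≤ d ^ (β + 1) := Real.rpow_nonneg hd _
  calc 2 * (β + 1) * (s * d ^ β)
      ≤ 2 * (β + 1) * (s ^ (β + 1) / 2 / (β + 1) + 2 ^ β⁻¹ * d ^ (β + 1) / ((β + 1) / β)) := by
        gcongr
    _ = s ^ (β + 1) + 2 * β * (2 ^ β⁻¹ * d ^ (β + 1)) := by field_simp
    _ ≤ s ^ (β + 1) + 2 * β * (2 * d ^ (β + 1)) := by gcongr
    _ = s ^ (β + 1) + 4 * β * d ^ (β + 1) := by ring

section Primitive

variable {β δ M : ℝ}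

lemma Ffun_of_nonpos (hM : 0 ≤ M) {t : ℝ} (ht : t ≤ 0) : Ffun β δ M t = 0 := by
  rw [Ffun, max_eq_right ht, min_eq_left hM, zero_add, sub_self]

lemma Ffun_of_mem_Icc {t : ℝ} (ht : t ∈ Set.Icc 0 M) : Ffun β δ M t = (t + δ) ^ β - δ ^ β := by
  rw [Ffun, max_eq_left ht.1, min_eq_left ht.2]

lemma Ffun_nonneg (hβ : 0 ≤ β) (hδ : 0 ≤ δ) (hM : 0 ≤ M) (t : ℝ) : 0 ≤ Ffun β δ M t := by
  have hclamp : 0 ≤ min (max t 0) M := le_min (le_max_right t 0) hM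
  exact sub_nonneg.2 (Real.rpow_le_rpow hδ (by linarith) hβ)

lemma continuous_Ffun (hβ : 0 ≤ β) : Continuous (Ffun β δ M) :=
  ((((continuous_id.max continuous_const).min continuous_const).add continuous_const).rpow_const
    fun _ => Or.inr hβ).sub continuous_const

lemma Fcal_of_nonpos (hM : 0 ≤ M) {t : ℝ} (ht : t ≤ 0) : Fcal β δ M t = 0 := by
  rw [Fcal, integral_congr (g := fun _ => 0), integral_zero]
  intro τ hτ
  rw [Set.uIcc_of_ge ht] at hτ
  exact Ffun_of_nonpos hM hτ.2

lemma monotone_Fcal (hβ : 0 ≤ β) (hδ : 0 ≤ δ) (hM : 0 ≤ M) : Monotone (Fcal β δ M) := by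
  intro a b hab
  have hint (x : ℝ) : IntervalIntegrable (Ffun β δ M) MeasureTheory.volume 0 x :=
    (continuous_Ffun hβ).intervalIntegrable 0 x
  have hdiff : Fcal β δ M b - Fcal β δ M a = ∫ τ in a..b, Ffun β δ M τ :=
    integral_interval_sub_left (hint b) (hint a)
  rw [← sub_nonneg, hdiff]
  exact integral_nonneg hab fun τ _ => Ffun_nonneg hβ hδ hM τ

lemma Fcal_truncation_le (hβ : 0 ≤ β) (hδ : 0 ≤ δ) (hM : 0 ≤ M) (t : ℝ) :
    Fcal β δ M (min (max t 0) M) ≤ Fcal β δ M t := by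
  rcases le_total t 0 with ht | ht
  · rw [max_eq_right ht, min_eq_left hM, Fcal_of_nonpos hM le_rfl, Fcal_of_nonpos hM ht]
  · rw [max_eq_left ht]
    exact monotone_Fcal hβ hδ hM (min_le_left t M)

lemma Fcal_of_mem_Icc (hβ : 0 ≤ β) {s : ℝ} (hs : s ∈ Set.Icc 0 M) :
    Fcal β δ M s = ((s + δ) ^ (β + 1) - δ ^ (β + 1)) / (β + 1) - s * δ ^ β := by
  have hcongr : Fcal β δ M s = ∫ τ in (0:ℝ)..s, ((τ + δ) ^ β - δ ^ β) := by
    refine integral_congr fun τ hτ => Ffun_of_mem_Icc ?_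
    rw [Set.uIcc_of_le hs.1] at hτ
    exact ⟨hτ.1, hτ.2.trans hs.2⟩
  have hcont : Continuous fun τ : ℝ => (τ + δ) ^ β :=
    (continuous_id.add continuous_const).rpow_const fun _ => Or.inr hβ
  rw [hcongr, integral_sub (hcont.intervalIntegrable 0 s) intervalIntegrable_const,
    integral_const, integral_comp_add_right (fun τ => τ ^ β),
    integral_rpow (Or.inl (by linarith)), zero_add, smul_eq_mul, sub_zero]

lemma lower_bound_le_Fcal_of_mem_Icc (hβ : 1 ≤ β) (hδ : 0 < δ) {s : ℝ} (hs : s ∈ Set.Icc 0 M) :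
    (s + δ) ^ (β + 1) / (2 * (β + 1)) - 2 * δ ^ (β + 1) ≤ Fcal β δ M s := by
  rw [Fcal_of_mem_Icc (by linarith) hs]
  have hyoung := two_mul_mul_rpow_le hβ hs.1 hδ.le
  have hpow : s ^ (β + 1) ≤ (s + δ) ^ (β + 1) :=
    Real.rpow_le_rpow hs.1 (by linarith) (by linarith)
  have hδpow : 0 ≤ δ ^ (β + 1) := Real.rpow_nonneg hδ.le _
  rw [← sub_nonneg]
  have hexpand : ((s + δ) ^ (β + 1) - δ ^ (β + 1)) / (β + 1) - s * δ ^ β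
      - ((s + δ) ^ (β + 1) / (2 * (β + 1)) - 2 * δ ^ (β + 1))
      = ((s + δ) ^ (β + 1) + (4 * β + 2) * δ ^ (β + 1) - 2 * (β + 1) * (s * δ ^ β))
        / (2 * (β + 1)) := by
    field_simp; ring
  rw [hexpand]
  exact div_nonneg (by linarith) (by linarith)

end Primitive

theorem primitive_lower_bound_general (β δ M : ℝ) (hβ : 1 ≤ β)
    (hδ : 0 < δ) (hM : 0 < M) (t : ℝ) :
    (min (max t 0) M + δ) ^ (β + 1) / (2 * (β + 1)) - 2 * δ ^ (β + 1)
      ≤ Fcal β δ M t := by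
  have hs : min (max t 0) M ∈ Set.Icc 0 M := ⟨le_min (le_max_right t 0) hM.le, min_le_right _ _⟩
  exact (lower_bound_le_Fcal_of_mem_Icc hβ hδ hs).trans
    (Fcal_truncation_le (by linarith) hδ.le hM.le t)

theorem primitive_lower_bound (p β δ M : ℝ) (hp : 2 ≤ p) (hβ : 1 ≤ β)
    (hδ : 0 < δ) (hM : 0 < M) (t : ℝ) :
    (min (max t 0) M + δ) ^ (β + 1) / (2 * (β + 1)) - 2 * δ ^ (β + 1)
      ≤ Fcal β δ M t :=
  primitive_lower_bound_general β δ M hβ hδ hM t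
end
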